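/- arXiv:1306.1607 — 2 statements merged into one kernel-verified Lean document; each statement's English description precedes it below -/
import Mathlib

section
/- Let R be an integral domain, let S1, S2, S3 be sets, and let α1 : S3 → S1 and α2 : S3 → S2 be maps. Consider the R-module homomorphism β : Map(S1, R) ⊕ Map(S2, R) → Map(S3, R) sending (f1, f2) to f1 ∘ α1 − f2 ∘ α2 (difference taken pointwise). Then the cokernel of β is R-torsion free; equivalently, if g : S3 → R and a ∈ R with a ≠ 0 are such that a·g lies in the image of β, then g itself lies in the image of β. -/
/-- **Lemma 3.3 (lem:sets).** Let `R` be an integral domain and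
`α1 : S3 → S1`, `α2 : S3 → S2` maps of sets.  The cokernel of the map
`β : Map(S1, R) ⊕ Map(S2, R) → Map(S3, R)`, `(f1, f2) ↦ f1 ∘ α1 - f2 ∘ α2`,
is `R`-torsion free: if `g : S3 → R` and `a ≠ 0` are such that `a • g` lies in
the image of `β`, then `g` itself lies in the image of `β`. -/
theorem cokernel_of_difference_map_torsionFree
    {R : Type*} [CommRing R] [IsDomain R]
    {S1 S2 S3 : Type*} (α1 : S3 → S1) (α2 : S3 → S2)
    (g : S3 → R) (a : R) (ha : a ≠ 0)
    (h : ∃ f1 : S1 → R, ∃ f2 : S2 → R,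
      a • g = (fun s => f1 (α1 s) - f2 (α2 s))) :
    ∃ f1 : S1 → R, ∃ f2 : S2 → R,
      g = (fun s => f1 (α1 s) - f2 (α2 s)) := by
  classical
  obtain ⟨f1, f2, hf⟩ := h
  -- combined value function on S1 ⊕ S2
  set v : S1 ⊕ S2 → R := Sum.elim f1 f2 with hv
  -- edge relation
  set r : (S1 ⊕ S2) → (S1 ⊕ S2) → Prop :=
    fun x y => ∃ s, x = Sum.inl (α1 s) ∧ y = Sum.inr (α2 s) with hr
  have hedge : ∀ s, v (Sum.inl (α1 s)) - v (Sum.inr (α2 s)) = a * g s := by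
    intro s
    have := congrFun hf s
    simp only [Pi.smul_apply, smul_eq_mul] at this
    simp [hv, this.symm]
  -- values are congruent mod a along the generated equivalence
  have hdvd : ∀ x y, Relation.EqvGen r x y → a ∣ v x - v y := by
    intro x y hxy
    induction hxy with
    | rel x y hxy =>
        obtain ⟨s, rfl, rfl⟩ := hxy
        rw [hedge s]; exact Dvd.intro _ rfl
    | refl x => simp
    | symm x y _ ih => simpa using ih.neg_right
    | trans x y z _ _ ih1 ih2 =>
        have := dvd_add ih1 ih2
        simpa using this
  let st : Setoid (S1 ⊕ S2) := Relation.EqvGen.setoid r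
  -- base value of the component of x
  let c : S1 ⊕ S2 → R := fun x => v (Quotient.mk st x).out
  have hc : ∀ x, a ∣ v x - c x := by
    intro x
    exact hdvd _ _ (Quotient.exact ((Quotient.mk st x).out_eq)).symm
  have hceq : ∀ x y, Relation.EqvGen r x y → c x = c y := by
    intro x y hxy
    have : Quotient.mk st x = Quotient.mk st y := Quotient.sound hxy
    simp only [c, this]
  -- divide by a
  let w : S1 ⊕ S2 → R := fun x => (hc x).choose
  have hw : ∀ x, v x - c x = a * w x := fun x => (hc x).choose_spec
  refine ⟨fun x => w (Sum.inl x), fun y => w (Sum.inr y), ?_⟩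
  funext s
  apply mul_left_cancel₀ ha
  have hcc : c (Sum.inl (α1 s)) = c (Sum.inr (α2 s)) :=
    hceq _ _ (Relation.EqvGen.rel _ _ ⟨s, rfl, rfl⟩)
  have := hedge s
  calc a * g s = v (Sum.inl (α1 s)) - v (Sum.inr (α2 s)) := (hedge s).symm
    _ = (v (Sum.inl (α1 s)) - c (Sum.inl (α1 s)))
        - (v (Sum.inr (α2 s)) - c (Sum.inr (α2 s))) := by rw [hcc]; ring
    _ = a * w (Sum.inl (α1 s)) - a * w (Sum.inr (α2 s)) := by rw [hw, hw]
    _ = a * (w (Sum.inl (α1 s)) - w (Sum.inr (α2 s))) := by ring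
end

section
/- Let X be a connected topological space and let Y ⊆ X be a finite nonempty set of closed points of X such that X \ Y is not connected and Y is minimal with this property, i.e., for every proper subset Y' ⊊ Y, the space X \ Y' is connected. Assume moreover that every connected component of X \ Y is open in X \ Y. Then for every connected component C of X \ Y, the closure of C in X equals C ∪ Y. -/
/-- **(From the proof of Theorem 1.1, Section 3.)** Let `X` be a connected
topological space and `Y ⊆ X` a finite nonempty set of closed points such that
`X \ Y` is not connected and `Y` is minimal with this property (for every
proper subset `Y' ⊊ Y`, the space `X \ Y'` is connected).  Assume every
connected component of `X \ Y` is open in `X \ Y`.  Then for every connected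
component `C` of `X \ Y` (the component of a point `z` of `X \ Y`), the
closure of `C` in `X` equals `C ∪ Y`. -/
theorem closure_component_of_minimal_disconnecting_set
    {X : Type*} [TopologicalSpace X] [ConnectedSpace X]
    (Y : Set X) (hfin : Y.Finite) (hne : Y.Nonempty)
    (hclosed : ∀ y ∈ Y, IsClosed ({y} : Set X))
    (hdisconn : ¬ IsConnected (Yᶜ : Set X))
    (hmin : ∀ Y' : Set X, Y' ⊂ Y → IsConnected ((Y')ᶜ : Set X))
    (hopen : ∀ z : (Yᶜ : Set X), IsOpen (connectedComponent z))
    (z : (Yᶜ : Set X)) :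
    closure (Subtype.val '' connectedComponent z) =
      (Subtype.val '' connectedComponent z) ∪ Y := by
  have hYc : IsClosed Y := by
    rw [← Set.biUnion_of_singleton Y]
    exact hfin.isClosed_biUnion hclosed
  have hYo : IsOpen (Yᶜ : Set X) := hYc.isOpen_compl
  have hemb : Topology.IsOpenEmbedding ((↑) : (Yᶜ : Set X) → X) := hYo.isOpenEmbedding_subtypeVal
  set C' : Set (Yᶜ : Set X) := connectedComponent z with hC'def
  set C : Set X := Subtype.val '' C' with hCdef
  -- Step 1: closure C ∩ Yᶜ ⊆ C
  have h1 : closure C ∩ Yᶜ ⊆ C := by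
    rintro x ⟨hxc, hxY⟩
    have hmem : (⟨x, hxY⟩ : (Yᶜ : Set X)) ∈ Subtype.val ⁻¹' closure C := hxc
    have h2 : (⟨x, hxY⟩ : (Yᶜ : Set X)) ∈ closure (Subtype.val ⁻¹' C) :=
      hemb.isOpenMap.preimage_closure_subset_closure_preimage hmem
    have hpre : (Subtype.val ⁻¹' C : Set (Yᶜ : Set X)) = C' :=
      Set.preimage_image_eq _ Subtype.val_injective
    rw [hpre, isClosed_connectedComponent.closure_eq] at h2
    exact ⟨_, h2, rfl⟩
  have hCopen : IsOpen C := hemb.isOpenMap _ (hopen z)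
  have hzC : (z : X) ∈ C := ⟨z, mem_connectedComponent, rfl⟩
  have hsub : closure C ⊆ C ∪ Y := by
    intro x hx
    by_cases hxY : x ∈ Y
    · exact Or.inr hxY
    · exact Or.inl (h1 ⟨hx, hxY⟩)
  refine Set.Subset.antisymm hsub (Set.union_subset subset_closure ?_)
  -- Step 2: Y ⊆ closure C
  intro y hy
  by_contra hyc
  have hY' : (Y \ {y}) ⊂ Y := Set.sdiff_singleton_ssubset.mpr hy
  have hconn := hmin (Y \ {y}) hY'
  -- obtain a point of Yᶜ outside C'
  have hw : ∃ w : (Yᶜ : Set X), w ∉ C' := by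
    by_contra h
    push_neg at h
    have huniv : C' = Set.univ := Set.eq_univ_of_forall h
    have hcs : ConnectedSpace (Yᶜ : Set X) :=
      connectedSpace_iff_connectedComponent.mpr ⟨z, huniv⟩
    exact hdisconn (isConnected_iff_connectedSpace.mpr hcs)
  obtain ⟨w, hw⟩ := hw
  have hwC : (w : X) ∉ closure C := by
    intro h
    obtain ⟨w', hw', he⟩ := h1 ⟨h, w.2⟩
    exact hw (Subtype.val_injective he ▸ hw')
  have hcov : ((Y \ {y})ᶜ : Set X) ⊆ C ∪ (closure C)ᶜ := by
    intro x hx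
    by_cases hxc : x ∈ closure C
    · rcases hsub hxc with h | h
      · exact Or.inl h
      · have hxy : x = y := by
          by_contra hne'
          exact hx ⟨h, hne'⟩
        rw [hxy] at hxc
        exact absurd hxc hyc
    · exact Or.inr hxc
  have hne1 : (((Y \ {y})ᶜ : Set X) ∩ C).Nonempty :=
    ⟨(z : X), fun h => z.2 h.1, hzC⟩
  have hne2 : (((Y \ {y})ᶜ : Set X) ∩ (closure C)ᶜ).Nonempty :=
    ⟨(w : X), fun h => w.2 h.1, hwC⟩
  obtain ⟨x, -, hx2, hx3⟩ :=
    hconn.isPreconnected _ _ hCopen isClosed_closure.isOpen_compl hcov hne1 hne2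
  exact hx3 (subset_closure hx2)
end
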